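/- For every integer s ≥ 3, let P_s = 3·Q_s − (1,…,1) ⊆ ℝ^{2s+1}, where Q_s is the stable set polytope of the cycle C_{2s+1}, and let P_s^∨ = {y ∈ ℝ^{2s+1} : ⟨x,y⟩ ≤ 1 for all x ∈ P_s} be its polar (dual) set with respect to the standard inner product. Then the point (1/(s−1), …, 1/(s−1)) is an extreme point of P_s^∨ that is not a lattice point; in particular, P_s^∨ is not a lattice polytope, i.e., P_s is not a reflexive polytope. -/

import Mathlib

/-- `W` is a stable (independent) set of the cycle `C_{2s+1}` on vertex set `Fin (2*s+1)`,
whose edges are `{i, i+1}` with addition modulo `2s+1`. -/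
def IsStableSet (s : ℕ) (W : Finset (Fin (2 * s + 1))) : Prop :=
  ∀ i : Fin (2 * s + 1), ¬(i ∈ W ∧ i + 1 ∈ W)

/-- The stable set polytope of the odd cycle `C_{2s+1}`: the convex hull of the indicator
vectors of the stable sets of `C_{2s+1}`. -/
def stableSetPolytope (s : ℕ) : Set (Fin (2 * s + 1) → ℝ) :=
  convexHull ℝ {x | ∃ W : Finset (Fin (2 * s + 1)), IsStableSet s W ∧
    x = fun i => if i ∈ W then (1 : ℝ) else 0}


/-- The polar (dual) set of a subset of `ℝ^{2s+1}` with respect to the standard inner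
product `⟨x, y⟩ = ∑ i, x i * y i`. -/
def polarDual (s : ℕ) (P : Set (Fin (2 * s + 1) → ℝ)) : Set (Fin (2 * s + 1) → ℝ) :=
  {y | ∀ x ∈ P, ∑ i, x i * y i ≤ 1}

/-! ### Auxiliary lemmas -/

open Fin.NatCast Fin.CommRing

lemma stable_card_le' {s : ℕ} {W : Finset (Fin (2*s+1))} (hW : IsStableSet s W) :
    W.card ≤ s := by
  have hdisj : Disjoint W (W.image (· + 1)) := by
    rw [Finset.disjoint_left]
    intro j hj hjI
    obtain ⟨i, hiW, rfl⟩ := Finset.mem_image.mp hjI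
    exact hW i ⟨hiW, hj⟩
  have hcard : (W ∪ W.image (· + 1)).card ≤ 2*s+1 :=
    le_trans (Finset.card_le_univ _) (by simp)
  have himg : (W.image (· + 1)).card = W.card :=
    Finset.card_image_of_injective _ (add_left_injective 1)
  rw [Finset.card_union_of_disjoint hdisj, himg] at hcard
  omega

/-- The maximum stable set `{j, j+2, …, j+2(s-1)}` of the odd cycle. -/
def mS (s : ℕ) (j : Fin (2*s+1)) : Finset (Fin (2*s+1)) :=
  (Finset.range s).image (fun k => j + ((2*k : ℕ) : Fin (2*s+1)))

lemma mS_inj {s : ℕ} (j : Fin (2*s+1)) : ∀ k ∈ Finset.range s, ∀ k' ∈ Finset.range s,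
    j + ((2*k : ℕ) : Fin (2*s+1)) = j + ((2*k' : ℕ) : Fin (2*s+1)) → k = k' := by
  intro k hk k' hk' h
  have h2 : ((2*k : ℕ) : Fin (2*s+1)) = ((2*k' : ℕ) : Fin (2*s+1)) := add_left_cancel h
  have h3 := congrArg Fin.val h2
  rw [Fin.val_natCast, Fin.val_natCast] at h3
  simp only [Finset.mem_range] at hk hk'
  rw [Nat.mod_eq_of_lt (by omega), Nat.mod_eq_of_lt (by omega)] at h3
  omega

lemma mS_stable {s : ℕ} (j : Fin (2*s+1)) : IsStableSet s (mS s j) := by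
  rintro i ⟨h1, h2⟩
  obtain ⟨k, hk, rfl⟩ := Finset.mem_image.mp h1
  obtain ⟨k', hk', he⟩ := Finset.mem_image.mp h2
  simp only [Finset.mem_range] at hk hk'
  have h2' : ((2*k' : ℕ) : Fin (2*s+1)) = ((2*k+1 : ℕ) : Fin (2*s+1)) := by
    have h4 : j + ((2*k' : ℕ) : Fin (2*s+1)) = j + (((2*k : ℕ) : Fin (2*s+1)) + 1) := by
      rw [he]; ring
    have h5 := add_left_cancel h4
    rw [h5]; push_cast; ring
  have h3 := congrArg Fin.val h2'
  rw [Fin.val_natCast, Fin.val_natCast] at h3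
  rw [Nat.mod_eq_of_lt (by omega), Nat.mod_eq_of_lt (by omega)] at h3
  omega

lemma mS_card' {s : ℕ} (j : Fin (2*s+1)) : (mS s j).card = s := by
  rw [mS, Finset.card_image_of_injOn (fun k hk k' hk' h => mS_inj j k hk k' hk' h),
    Finset.card_range]

lemma mS_sum' {s : ℕ} (j : Fin (2*s+1)) (z : Fin (2*s+1) → ℝ) :
    ∑ i ∈ mS s j, z i = ∑ k ∈ Finset.range s, z (j + ((2*k : ℕ) : Fin (2*s+1))) :=
  Finset.sum_image (mS_inj j)

lemma two_s_cast' {s : ℕ} : ((2*s : ℕ) : Fin (2*s+1)) = -1 := by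
  have h : ((2*s : ℕ) : Fin (2*s+1)) + 1 = 0 := by
    have h0 : ((2*s+1 : ℕ) : Fin (2*s+1)) = 0 := Fin.natCast_self _
    rw [← h0]; push_cast; ring
  linear_combination h

/-- Any vector orthogonal (in the affine sense) to all maximum stable set constraints
is zero: the tight constraints span the whole space. -/
lemma myUnique {s : ℕ} (hs : 3 ≤ s) (d : Fin (2*s+1) → ℝ)
    (h : ∀ j, 3 * ∑ i ∈ mS s j, d i - ∑ i, d i = 0) : d = 0 := by
  have hg : ∀ j, ∑ k ∈ Finset.range s, d (j + ((2*k : ℕ) : Fin (2*s+1))) = (∑ i, d i) / 3 := by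
    intro j
    have := h j
    rw [mS_sum'] at this
    linarith
  have key : ∀ p : Fin (2*s+1), d p = d (p - 1) := by
    intro p
    have e1 := hg p
    have e2 := hg (p + ((2:ℕ) : Fin (2*s+1)))
    have e2' : ∑ k ∈ Finset.range s, d (p + ((2*(k+1) : ℕ) : Fin (2*s+1)))
        = (∑ i, d i) / 3 := by
      rw [← e2]
      exact Finset.sum_congr rfl fun k _ => by congr 1; push_cast; ring
    have t1 : ∑ k ∈ Finset.range (s+1), d (p + ((2*k : ℕ) : Fin (2*s+1)))
        = ∑ k ∈ Finset.range s, d (p + ((2*(k+1) : ℕ) : Fin (2*s+1)))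
          + d (p + ((2*0 : ℕ) : Fin (2*s+1))) :=
      Finset.sum_range_succ' _ s
    have t2 : ∑ k ∈ Finset.range (s+1), d (p + ((2*k : ℕ) : Fin (2*s+1)))
        = ∑ k ∈ Finset.range s, d (p + ((2*k : ℕ) : Fin (2*s+1)))
          + d (p + ((2*s : ℕ) : Fin (2*s+1))) :=
      Finset.sum_range_succ _ s
    have hend : p + ((2*s : ℕ) : Fin (2*s+1)) = p - 1 := by
      rw [two_s_cast']; ring
    have hzero : p + ((2*0 : ℕ) : Fin (2*s+1)) = p := by norm_num
    rw [hend, e1] at t2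
    rw [hzero, e2'] at t1
    rw [t1] at t2
    linarith
  have key' : ∀ p : Fin (2*s+1), d (p + 1) = d p := by
    intro p
    have := key (p + 1)
    simpa using this
  have hconstN : ∀ k : ℕ, d ((k : Fin (2*s+1))) = d 0 := by
    intro k
    induction k with
    | zero => norm_num
    | succ k ih =>
      have hstep : ((k+1 : ℕ) : Fin (2*s+1)) = ((k : ℕ) : Fin (2*s+1)) + 1 := by
        push_cast; ring
      rw [hstep, key', ih]
  have hconst : ∀ i : Fin (2*s+1), d i = d 0 := by
    intro i
    have := hconstN i.val
    rwa [Fin.cast_val_eq_self] at this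
  have hsum : ∑ i, d i = (2*s+1 : ℝ) * d 0 := by
    rw [Finset.sum_congr rfl fun i _ => hconst i, Finset.sum_const]
    simp [mul_comm]
  have hmS : ∑ i ∈ mS s 0, d i = (s : ℝ) * d 0 := by
    rw [Finset.sum_congr rfl fun i _ => hconst i, Finset.sum_const, mS_card']
    simp [mul_comm]
  have h0 := h 0
  rw [hsum, hmS] at h0
  have hd0 : d 0 = 0 := by
    have hs' : (3 : ℝ) ≤ (s : ℝ) := by exact_mod_cast hs
    nlinarith [h0]
  funext i
  rw [hconst i, hd0]
  rfl

lemma sum_indicator' {s : ℕ} (W : Finset (Fin (2*s+1))) :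
    ∑ i, (if i ∈ W then (1:ℝ) else 0) = W.card := by simp

lemma sum_le_of_mem_Q {s : ℕ} {q : Fin (2*s+1) → ℝ} (hq : q ∈ stableSetPolytope s) :
    ∑ i, q i ≤ (s : ℝ) := by
  have hlin : IsLinearMap ℝ (fun x : Fin (2*s+1) → ℝ => ∑ i, x i) :=
    ⟨fun a b => by simp [Finset.sum_add_distrib], fun c a => by simp [Finset.mul_sum]⟩
  have hconv : Convex ℝ {x : Fin (2*s+1) → ℝ | ∑ i, x i ≤ (s:ℝ)} :=
    convex_halfSpace_le hlin _
  refine convexHull_min ?_ hconv hq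
  rintro x ⟨W, hW, rfl⟩
  simp only [Set.mem_setOf_eq]
  rw [sum_indicator']
  exact_mod_cast stable_card_le' hW

lemma inner_x {s : ℕ} (W : Finset (Fin (2*s+1))) (z : Fin (2*s+1) → ℝ) :
    ∑ i, ((3:ℝ) * (if i ∈ W then (1:ℝ) else 0) - 1) * z i
      = 3 * ∑ i ∈ W, z i - ∑ i, z i := by
  have hpt : ∀ i, ((3:ℝ) * (if i ∈ W then (1:ℝ) else 0) - 1) * z i
      = (if i ∈ W then (3:ℝ) * z i else 0) - z i := by
    intro i; by_cases h : i ∈ W <;> simp [h] <;> ring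
  rw [Finset.sum_congr rfl fun i _ => hpt i, Finset.sum_sub_distrib]
  congr 1
  rw [Finset.sum_ite_mem, Finset.univ_inter, Finset.mul_sum]

/-- For `s ≥ 3`, with `P_s = 3 • Q_s - (1,…,1)`, the point `(1/(s-1), …, 1/(s-1))` is an
extreme point of the polar dual `P_s^∨` which is not a lattice point; in particular `P_s^∨`
is not a lattice polytope, i.e. `P_s` is not reflexive. -/
theorem shifted_stableSetPolytope_not_reflexive (s : ℕ) (hs : 3 ≤ s) :
    ((fun _ => 1 / ((s : ℝ) - 1)) ∈
        Set.extremePoints ℝ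
          (polarDual s ((fun x => (3 : ℝ) • x - fun _ => (1 : ℝ)) '' stableSetPolytope s)) ∧
      ¬(∀ i : Fin (2 * s + 1), ∃ m : ℤ, (1 : ℝ) / ((s : ℝ) - 1) = (m : ℝ))) ∧
      ¬(∀ y ∈ Set.extremePoints ℝ
          (polarDual s ((fun x => (3 : ℝ) • x - fun _ => (1 : ℝ)) '' stableSetPolytope s)),
          ∀ i, ∃ m : ℤ, y i = (m : ℝ)) := by
  have hsR : (3:ℝ) ≤ (s:ℝ) := by exact_mod_cast hs
  set c : ℝ := 1 / ((s:ℝ) - 1) with hc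
  have hs1 : (0:ℝ) < (s:ℝ) - 1 := by linarith
  have hc1 : ((s:ℝ) - 1) * c = 1 := by
    rw [hc]; field_simp
  have hcpos : 0 < c := by rw [hc]; positivity
  have hclt1 : c < 1 := by
    rw [hc, div_lt_one hs1]; linarith
  -- cardinality of the index type
  have hcardU : ((Finset.univ : Finset (Fin (2*s+1))).card : ℝ) = 2*(s:ℝ)+1 := by
    rw [Finset.card_univ, Fintype.card_fin]; push_cast; ring
  -- the shifted polytope
  set P := ((fun x : Fin (2*s+1) → ℝ => (3 : ℝ) • x - fun _ => (1 : ℝ)) '' stableSetPolytope s)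
    with hP
  -- membership of the constant point in the polar dual
  have hmem : (fun _ => c) ∈ polarDual s P := by
    rintro x ⟨q, hq, rfl⟩
    simp only [Pi.sub_apply, Pi.smul_apply, smul_eq_mul]
    have hsplit : ∑ i, ((3:ℝ) * q i - 1) * (fun _ => c) i
        = (3 * (∑ i, q i) - (2*(s:ℝ)+1)) * c := by
      rw [← Finset.sum_mul]
      congr 1
      rw [Finset.sum_sub_distrib, ← Finset.mul_sum]
      simp only [Finset.sum_const, nsmul_eq_mul, mul_one]
      rw [hcardU]
    rw [hsplit]
    have hqs := sum_le_of_mem_Q hq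
    nlinarith [hqs, hcpos, hc1]
  -- the tight constraint points
  set xj : Fin (2*s+1) → (Fin (2*s+1) → ℝ) :=
    fun j i => (3:ℝ) * (if i ∈ mS s j then (1:ℝ) else 0) - 1 with hxj
  have hxmem : ∀ j, xj j ∈ P := by
    intro j
    refine ⟨fun i => if i ∈ mS s j then (1:ℝ) else 0,
      subset_convexHull ℝ _ ⟨mS s j, mS_stable j, rfl⟩, ?_⟩
    funext i
    simp [hxj]
  -- generic inner product with xj
  have hinnerx : ∀ j, ∀ z : Fin (2*s+1) → ℝ,
      ∑ i, xj j i * z i = 3 * ∑ i ∈ mS s j, z i - ∑ i, z i := by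
    intro j z
    exact inner_x (mS s j) z
  -- tightness at the constant point
  have htight : ∀ j, ∑ i, xj j i * (fun _ => c) i = 1 := by
    intro j
    rw [hinnerx]
    have hA : ∑ i ∈ mS s j, (fun _ => c) i = (s:ℝ) * c := by
      rw [Finset.sum_const, mS_card']
      simp [mul_comm]
    have hB : ∑ i : Fin (2*s+1), (fun _ => c) i = (2*(s:ℝ)+1) * c := by
      rw [Finset.sum_const]
      simp only [nsmul_eq_mul]
      rw [hcardU]
    rw [hA, hB]
    linarith [hc1]
  -- a point of the polar dual where all tight constraints hold must be the constant point
  have hforce : ∀ z : Fin (2*s+1) → ℝ,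
      (∀ j, ∑ i, xj j i * z i = 1) → z = fun _ => c := by
    intro z hz
    have hd : (fun i => z i - c) = 0 := by
      apply myUnique hs
      intro j
      have hz' := hz j
      rw [hinnerx] at hz'
      have hA : ∑ i ∈ mS s j, (z i - c) = ∑ i ∈ mS s j, z i - (s:ℝ) * c := by
        rw [Finset.sum_sub_distrib, Finset.sum_const, mS_card']
        simp [mul_comm]
      have hB : ∑ i, (z i - c) = ∑ i, z i - (2*(s:ℝ)+1) * c := by
        rw [Finset.sum_sub_distrib, Finset.sum_const]
        simp only [nsmul_eq_mul]
        rw [hcardU]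
      rw [hA, hB]
      linarith [hc1]
    funext i
    have := congrFun hd i
    simp only [Pi.zero_apply] at this
    linarith
  -- the extreme point property
  have hext : (fun _ => c) ∈ Set.extremePoints ℝ (polarDual s P) := by
    rw [mem_extremePoints]
    refine ⟨hmem, ?_⟩
    intro y1 h1 y2 h2 hseg
    obtain ⟨a, b, ha, hb, hab, heq⟩ := hseg
    have hval : ∀ j, a * (∑ i, xj j i * y1 i) + b * (∑ i, xj j i * y2 i) = 1 := by
      intro j
      have hcomb : ∑ i, xj j i * ((a • y1 + b • y2) i)
          = a * (∑ i, xj j i * y1 i) + b * (∑ i, xj j i * y2 i) := by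
        rw [Finset.mul_sum, Finset.mul_sum, ← Finset.sum_add_distrib]
        apply Finset.sum_congr rfl
        intro i _
        simp only [Pi.add_apply, Pi.smul_apply, smul_eq_mul]
        ring
      rw [← hcomb, heq, htight]
    have hone : ∀ z ∈ polarDual s P, ∀ j, ∑ i, xj j i * z i ≤ 1 := by
      intro z hzz j
      exact hzz (xj j) (hxmem j)
    have hy1 : ∀ j, ∑ i, xj j i * y1 i = 1 := by
      intro j
      have hu := hone y1 h1 j
      have hv := hone y2 h2 j
      nlinarith [hval j]
    have hy2 : ∀ j, ∑ i, xj j i * y2 i = 1 := by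
      intro j
      have hu := hone y1 h1 j
      have hv := hone y2 h2 j
      nlinarith [hval j]
    exact ⟨hforce y1 hy1, hforce y2 hy2⟩
  -- non-lattice point
  have hnl : ¬(∀ i : Fin (2 * s + 1), ∃ m : ℤ, (1 : ℝ) / ((s : ℝ) - 1) = (m : ℝ)) := by
    intro h
    obtain ⟨m, hm⟩ := h ⟨0, by omega⟩
    have h0 : (0:ℝ) < (m:ℝ) := by rw [← hm]; exact hcpos
    have h1 : (m:ℝ) < 1 := by rw [← hm]; exact hclt1
    have h0' : (0:ℤ) < m := by exact_mod_cast h0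
    have h1' : m < 1 := by exact_mod_cast h1
    omega
  refine ⟨⟨hext, hnl⟩, ?_⟩
  intro h
  exact hnl (fun i => h _ hext i)
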